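/- Let L be a finite distributive strong upper semilattice and S a distributive lattice with a greatest element ⊤. Let φ : L → S satisfy φ(x ⊔ y) = φ(x) ⊔ φ(y) for all x, y, φ(⊤) = ⊤, and φ(w) = φ(x) ⊓ φ(y) whenever IsGLB {x, y} w in L. Then there exists a unique lattice homomorphism φ̂ : D → S (preserving ⊓ and ⊔) such that φ = φ̂ ∘ ν. -/

import Mathlib

/-- A strong upper semilattice: any two elements with a common lower bound
have a greatest lower bound. -/
def StrongUpper (L : Type*) [SemilatticeSup L] : Prop :=
  ∀ x y : L, (∃ z, z ≤ x ∧ z ≤ y) → ∃ w, IsGLB {x, y} w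

/-- Every interval is a distributive lattice. -/
def IntervalDistrib (L : Type*) [SemilatticeSup L] : Prop :=
  ∀ a x y z w w' : L, a ≤ x → a ≤ y → a ≤ z →
    IsGLB {x, y} w → IsGLB {x ⊔ z, y ⊔ z} w' → w' = w ⊔ z

/-- Meet-irreducible element. -/
def MeetIrred {L : Type*} [SemilatticeSup L] [OrderTop L] (m : L) : Prop :=
  m ≠ ⊤ ∧ ∀ p q : L, IsGLB {p, q} m → m = p ∨ m = q

/-- An order filter on the set of meet-irreducibles of `L`. -/
structure MIOrderFilter (L : Type*) [SemilatticeSup L] [OrderTop L] where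
  carrier : Set L
  mi : ∀ m ∈ carrier, MeetIrred m
  upward : ∀ m ∈ carrier, ∀ m', MeetIrred m' → m ≤ m' → m' ∈ carrier

/-- Union of order filters (the meet of `D`). -/
def MIOrderFilter.union {L : Type*} [SemilatticeSup L] [OrderTop L]
    (F G : MIOrderFilter L) : MIOrderFilter L where
  carrier := F.carrier ∪ G.carrier
  mi := by rintro m (h | h); exacts [F.mi m h, G.mi m h]
  upward := by
    rintro m (h | h) m' h1 h2
    · exact Or.inl (F.upward m h m' h1 h2)
    · exact Or.inr (G.upward m h m' h1 h2)

/-- Intersection of order filters (the join of `D`). -/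
def MIOrderFilter.inter {L : Type*} [SemilatticeSup L] [OrderTop L]
    (F G : MIOrderFilter L) : MIOrderFilter L where
  carrier := F.carrier ∩ G.carrier
  mi := fun m hm => F.mi m hm.1
  upward := fun m hm m' h1 h2 => ⟨F.upward m hm.1 m' h1 h2, G.upward m hm.2 m' h1 h2⟩

/-- The embedding `ν : L → D`, `ν x = {m ∈ M | x ≤ m}`. -/
def nu {L : Type*} [SemilatticeSup L] [OrderTop L] (x : L) : MIOrderFilter L where
  carrier := {m : L | MeetIrred m ∧ x ≤ m}
  mi := fun m hm => hm.1
  upward := fun m hm m' h1 h2 => ⟨h1, hm.2.trans h2⟩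

/-!
Every element `x` of `L` is the meet of the meet-irreducibles above it: if `x ≠ ⊤` is not
meet-irreducible it is the meet of two strictly larger elements `p, q`, and interval
distributivity shows that a meet-irreducible above `x` lies above `p` or above `q`, so
`ν x = ν p ∪ ν q`. Hence `φ x` is the meet of `φ m` over `m ∈ ν x`, which forces
`φ̂ F = ⨅_{m ∈ F} φ m`. This map preserves unions trivially, and intersections because
`φ m ⊔ φ n = φ (m ⊔ n)` and `ν (m ⊔ n) ⊆ F ∩ G` for `m ∈ F`, `n ∈ G`; uniqueness holds since
every filter is a union of principal filters `ν m` (or is `ν ⊤ = ∅`).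
-/

section

variable {L : Type*} [SemilatticeSup L]

theorem MeetIrred.le_or_le_of_isGLB [OrderTop L] (hS : StrongUpper L) (hD : IntervalDistrib L)
    {m x p q : L} (hm : MeetIrred m) (hx : IsGLB {p, q} x) (hxm : x ≤ m) : p ≤ m ∨ q ≤ m := by
  have hxp : x ≤ p := hx.1 (by simp)
  have hxq : x ≤ q := hx.1 (by simp)
  obtain ⟨w, hw⟩ := hS (p ⊔ m) (q ⊔ m) ⟨m, le_sup_right, le_sup_right⟩
  -- distributivity of `[x, ⊤]`: `(p ⊔ m) ⊓ (q ⊔ m) = (p ⊓ q) ⊔ m = m`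
  have hwm : w = m := by rw [hD x p q m x w hxp hxq hxm hx hw, sup_eq_right.mpr hxm]
  rw [hwm] at hw
  rcases hm.2 _ _ hw with h | h
  · exact Or.inl (le_sup_left.trans h.ge)
  · exact Or.inr (le_sup_left.trans h.ge)

theorem exists_isGLB_lt_lt_of_not_meetIrred [OrderTop L] {x : L} (htop : x ≠ ⊤)
    (hx : ¬MeetIrred x) : ∃ p q, IsGLB {p, q} x ∧ x < p ∧ x < q := by
  simp only [MeetIrred, not_and, not_forall, not_or] at hx
  obtain ⟨p, q, hglb, hxp, hxq⟩ := hx htop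
  exact ⟨p, q, hglb, lt_of_le_of_ne (hglb.1 (by simp)) hxp,
    lt_of_le_of_ne (hglb.1 (by simp)) hxq⟩

theorem monotone_of_map_sup {S : Type*} [SemilatticeSup S] {φ : L → S}
    (hsup : ∀ x y, φ (x ⊔ y) = φ x ⊔ φ y) : Monotone φ := fun x y h => by
  rw [← sup_eq_right.mpr h, hsup]
  exact le_sup_left

end

namespace MIOrderFilter

variable {L : Type*} [SemilatticeSup L] [OrderTop L]

@[ext]
theorem ext {F G : MIOrderFilter L} (h : F.carrier = G.carrier) : F = G := by
  cases F; cases G; cases h; rfl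

theorem nu_top_carrier : (nu (⊤ : L)).carrier = ∅ :=
  Set.eq_empty_of_forall_notMem fun _ hm => hm.1.1 (top_le_iff.mp hm.2)

theorem nu_eq_union_of_isGLB (hS : StrongUpper L) (hD : IntervalDistrib L) {x p q : L}
    (hx : IsGLB {p, q} x) : nu x = (nu p).union (nu q) := by
  ext m
  constructor
  · rintro ⟨hm, hxm⟩
    exact (hm.le_or_le_of_isGLB hS hD hx hxm).imp (⟨hm, ·⟩) (⟨hm, ·⟩)
  · rintro (⟨hm, hpm⟩ | ⟨hm, hqm⟩)
    exacts [⟨hm, (hx.1 (by simp)).trans hpm⟩, ⟨hm, (hx.1 (by simp)).trans hqm⟩]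

def upperClosure (s : Finset L) : MIOrderFilter L where
  carrier := {m | MeetIrred m ∧ ∃ x ∈ s, x ≤ m}
  mi := fun _ hm => hm.1
  upward := fun _ ⟨_, x, hx, hxm⟩ _ hm' hmm' => ⟨hm', x, hx, hxm.trans hmm'⟩

theorem upperClosure_empty : upperClosure (∅ : Finset L) = nu ⊤ := by
  ext m
  simp [upperClosure, nu_top_carrier]

theorem upperClosure_insert [DecidableEq L] (a : L) (s : Finset L) :
    upperClosure (insert a s) = (nu a).union (upperClosure s) := by
  ext m
  simp [upperClosure, nu, union, and_or_left]

section Finite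

variable [Finite L]

noncomputable def toFinset (F : MIOrderFilter L) : Finset L :=
  (Set.toFinite F.carrier).toFinset

@[simp]
theorem mem_toFinset {F : MIOrderFilter L} {m : L} : m ∈ F.toFinset ↔ m ∈ F.carrier :=
  Set.Finite.mem_toFinset _

theorem upperClosure_toFinset (F : MIOrderFilter L) : upperClosure F.toFinset = F := by
  ext m
  refine ⟨fun ⟨hm, x, hx, hxm⟩ => F.upward x (mem_toFinset.mp hx) m hm hxm,
    fun hm => ⟨F.mi m hm, m, mem_toFinset.mpr hm, le_rfl⟩⟩

variable {S : Type*}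

/-- The map `φ̂` of the universal property. -/
noncomputable def lift [SemilatticeInf S] [OrderTop S] (φ : L → S) (F : MIOrderFilter L) : S :=
  F.toFinset.inf φ

section SemilatticeInf

variable [SemilatticeInf S] [OrderTop S] {φ : L → S}

theorem lift_le {F : MIOrderFilter L} {m : L} (hm : m ∈ F.carrier) : lift φ F ≤ φ m :=
  Finset.inf_le (mem_toFinset.mpr hm)

theorem le_lift {F : MIOrderFilter L} {a : S} (h : ∀ m ∈ F.carrier, a ≤ φ m) : a ≤ lift φ F :=
  Finset.le_inf fun m hm => h m (mem_toFinset.mp hm)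

theorem lift_anti {F G : MIOrderFilter L} (h : F.carrier ⊆ G.carrier) : lift φ G ≤ lift φ F :=
  le_lift fun _ hm => lift_le (h hm)

theorem lift_union (F G : MIOrderFilter L) : lift φ (F.union G) = lift φ F ⊓ lift φ G :=
  le_antisymm (le_inf (lift_anti Set.subset_union_left) (lift_anti Set.subset_union_right))
    (le_lift fun _ hm => hm.elim (inf_le_left.trans <| lift_le ·) (inf_le_right.trans <| lift_le ·))

theorem lift_nu_top : lift φ (nu ⊤) = ⊤ :=
  top_unique (le_lift fun m hm => by simp [nu_top_carrier] at hm)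

theorem lift_nu (hS : StrongUpper L) (hD : IntervalDistrib L) (hφ : Monotone φ)
    (htop : φ ⊤ = ⊤) (hmeet : ∀ x y w : L, IsGLB {x, y} w → φ w = φ x ⊓ φ y) (x : L) :
    lift φ (nu x) = φ x := by
  induction x using WellFoundedGT.induction with
  | _ x ih =>
  by_cases hx : x = ⊤
  · rw [hx, lift_nu_top, htop]
  by_cases hmi : MeetIrred x
  · exact le_antisymm (lift_le ⟨hmi, le_rfl⟩) (le_lift fun _ hm => hφ hm.2)
  obtain ⟨p, q, hglb, hxp, hxq⟩ := exists_isGLB_lt_lt_of_not_meetIrred hx hmi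
  rw [nu_eq_union_of_isGLB hS hD hglb, lift_union, ih p hxp, ih q hxq, hmeet p q x hglb]

end SemilatticeInf

theorem lift_inter [DistribLattice S] [OrderTop S] {φ : L → S}
    (hsup : ∀ x y, φ (x ⊔ y) = φ x ⊔ φ y) (hφ : ∀ x, lift φ (nu x) = φ x)
    (F G : MIOrderFilter L) : lift φ (F.inter G) = lift φ F ⊔ lift φ G := by
  refine le_antisymm ?_ (sup_le (lift_anti Set.inter_subset_left)
    (lift_anti Set.inter_subset_right))
  change lift φ (F.inter G) ≤ F.toFinset.inf φ ⊔ G.toFinset.inf φ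
  rw [Finset.inf_sup_distrib_right]
  refine Finset.le_inf fun m hm => ?_
  rw [Finset.inf_sup_distrib_left]
  refine Finset.le_inf fun n hn => ?_
  rw [← hsup, ← hφ]
  exact lift_anti fun k ⟨hk, hmnk⟩ =>
    ⟨F.upward m (mem_toFinset.mp hm) k hk (le_sup_left.trans hmnk),
      G.upward n (mem_toFinset.mp hn) k hk (le_sup_right.trans hmnk)⟩

theorem eq_lift_of_map_union [SemilatticeInf S] [OrderTop S] {φ : L → S} {ψ : MIOrderFilter L → S}
    (htop : φ ⊤ = ⊤) (hunion : ∀ F G, ψ (F.union G) = ψ F ⊓ ψ G) (hψ : ∀ x, φ x = ψ (nu x)) :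
    ψ = lift φ := by
  classical
  have hclosure : ∀ s : Finset L, ψ (upperClosure s) = s.inf φ := by
    intro s
    induction s using Finset.induction_on with
    | empty => rw [upperClosure_empty, ← hψ, htop, Finset.inf_empty]
    | insert a s _ ih => rw [upperClosure_insert, hunion, ih, ← hψ, Finset.inf_insert]
  funext F
  rw [← upperClosure_toFinset F, hclosure, upperClosure_toFinset]
  rfl

end Finite

end MIOrderFilter

theorem universal_property_of_D {L S : Type*} [SemilatticeSup L] [OrderTop L] [Finite L]
    [DistribLattice S] [OrderTop S]
    (hS : StrongUpper L) (hD : IntervalDistrib L)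
    (φ : L → S)
    (hsup : ∀ x y : L, φ (x ⊔ y) = φ x ⊔ φ y)
    (htop : φ ⊤ = ⊤)
    (hmeet : ∀ x y w : L, IsGLB {x, y} w → φ w = φ x ⊓ φ y) :
    ∃! φh : MIOrderFilter L → S,
      (∀ F G : MIOrderFilter L, φh (F.union G) = φh F ⊓ φh G) ∧
      (∀ F G : MIOrderFilter L, φh (F.inter G) = φh F ⊔ φh G) ∧
      (∀ x : L, φ x = φh (nu x)) := by
  have hnu : ∀ x, MIOrderFilter.lift φ (nu x) = φ x :=
    MIOrderFilter.lift_nu hS hD (monotone_of_map_sup hsup) htop hmeet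
  refine ⟨MIOrderFilter.lift φ, ⟨MIOrderFilter.lift_union,
    MIOrderFilter.lift_inter hsup hnu, fun x => (hnu x).symm⟩, ?_⟩
  rintro ψ ⟨hunion, -, hψ⟩
  exact MIOrderFilter.eq_lift_of_map_union htop hunion hψ
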